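/- On the manifold with corners ℝ³ with coordinates (x_{1c}, ξ_{1c}, t, τ̃) consider the 1-form obtained by contracting ω = dξ_{1c}∧(dx_{1c}/x_{1c}³) + d(η_{1c}/x_{1c})∧dy_{1c} + d(τ̃/x_{1c}²)∧dt + d(σζ̂/x_{1c})∧dz with the vector field −x_{1c}³∂_{x_{1c}} and restricting to {x_{1c} = 0}. The result is the 1-form α = dξ_{1c} + 2τ̃ dt, and α is a contact form on ℝ³_{t,τ̃,ξ_{1c}} (i.e. α ∧ dα is nonvanishing). -/
import Mathlib


open scoped RealInnerProductSpace

noncomputable section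

/-- Coordinates `(x_{1c}, y_{1c}, ξ_{1c}, η_{1c}, z, t, σ, τ̃, ζ̂)` on the blown-up
1c-ps phase space `ℳ` (also used for tangent vectors). -/
structure McPt (m n : ℕ) where
  x : ℝ
  y : EuclideanSpace ℝ (Fin m)
  xi : ℝ
  eta : EuclideanSpace ℝ (Fin m)
  z : EuclideanSpace ℝ (Fin n)
  t : ℝ
  sg : ℝ
  tau : ℝ
  zeta : EuclideanSpace ℝ (Fin n)

/-- The lifted symplectic form
`ω = dξ∧(dx/x³) + d(η/x)∧dy + d(τ̃/x²)∧dt + d(σζ̂/x)∧dz` on `ℳ`, in coordinates. -/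
def omegaM {m n : ℕ} (p u v : McPt m n) : ℝ :=
  (u.xi * v.x - v.xi * u.x) / p.x ^ 3
    + ((⟪u.eta, v.y⟫ / p.x - u.x / p.x ^ 2 * ⟪p.eta, v.y⟫)
        - (⟪v.eta, u.y⟫ / p.x - v.x / p.x ^ 2 * ⟪p.eta, u.y⟫))
    + ((u.tau / p.x ^ 2 - 2 * p.tau * u.x / p.x ^ 3) * v.t
        - (v.tau / p.x ^ 2 - 2 * p.tau * v.x / p.x ^ 3) * u.t)
    + (⟪p.x⁻¹ • (u.sg • p.zeta + p.sg • u.zeta) - (p.sg * u.x / p.x ^ 2) • p.zeta, v.z⟫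
        - ⟪p.x⁻¹ • (v.sg • p.zeta + p.sg • v.zeta) - (p.sg * v.x / p.x ^ 2) • p.zeta, u.z⟫)

/-- The vector field `-x_{1c}³ ∂_{x_{1c}}`. -/
def contractField {m n : ℕ} (p : McPt m n) : McPt m n :=
  ⟨-p.x ^ 3, 0, 0, 0, 0, 0, 0, 0, 0⟩

/-- The 1-form `α = dξ_{1c} + 2τ̃ dt` on `ℝ³` with coordinates `(t, τ̃, ξ_{1c})`. -/
def alpha3 (q v : ℝ × ℝ × ℝ) : ℝ := v.2.2 + 2 * q.2.1 * v.1

/-- Its exterior derivative `dα = 2 dτ̃∧dt`. -/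
def dalpha3 (u v : ℝ × ℝ × ℝ) : ℝ := 2 * (u.2.1 * v.1 - v.2.1 * u.1)

/-- the contraction of `ω` with `-x_{1c}³∂_{x_{1c}}` equals
`dξ_{1c} + 2τ̃ dt + x_{1c}·(η·dy + σζ̂·dz)`, hence restricts at `x_{1c} = 0` to the
pullback via `π` of the 1-form `α = dξ_{1c} + 2τ̃ dt` on `ℝ³_{t,τ̃,ξ_{1c}}`; and `α` is a
contact form on `ℝ³` (the 3-form `α ∧ dα` is nonvanishing: it is nonzero on the standard
basis `(e_t, e_τ̃, e_ξ)` at every point). -/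
theorem stmt12 (m n : ℕ) :
    (∀ p : McPt m n, 0 < p.x → ∀ v : McPt m n,
      omegaM p (contractField p) v
        = v.xi + 2 * p.tau * v.t + p.x * (⟪p.eta, v.y⟫ + p.sg * ⟪p.zeta, v.z⟫)) ∧
    (∀ p : ℝ × ℝ × ℝ,
      alpha3 p (1, 0, 0) * dalpha3 (0, 1, 0) (0, 0, 1)
        - alpha3 p (0, 1, 0) * dalpha3 (1, 0, 0) (0, 0, 1)
        + alpha3 p (0, 0, 1) * dalpha3 (1, 0, 0) (0, 1, 0) ≠ 0) := by
  constructor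
  · intro p hx v
    have hx' : p.x ≠ 0 := ne_of_gt hx
    simp only [omegaM, contractField]
    simp only [inner_zero_right, inner_smul_left, inner_add_left, inner_smul_right,
      inner_zero_left, inner_sub_left, RCLike.conj_to_real]
    set A := (⟪p.eta, v.y⟫ : ℝ)
    set B := (⟪p.zeta, v.z⟫ : ℝ)
    field_simp
    ring
  · intro p
    simp [alpha3, dalpha3]
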